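/- arXiv:2406.04559 — 2 statements merged into one kernel-verified Lean document; each statement's English description precedes it below -/
import Mathlib

section
/- Let p and e be primes such that the multiplicative order of p modulo e equals e−1, let k be a positive integer, d = k(e−1), q = p^d, F = GF(q), ω a generator of F*, and C = ⟨ω^e⟩ the subgroup of e-th powers in F*. Let T ≤ Sym(F) be the group of translations x ↦ x + b (b ∈ F), and let G₀ ≤ Sym(F) be generated by x ↦ ω^e·x and x ↦ x^p. If H ≤ ΓL₁(q) is any subgroup whose orbits on F ∖ {0} are exactly C and (F ∖ {0}) ∖ C, then the 2-closure of the group ⟨T, H⟩ satisfies ⟨T, H⟩^(2) ∩ AΓL₁(q) = ⟨T, G₀⟩. -/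
/-- The 2-closure of a permutation group `G ≤ Sym(Ω)`. -/
def twoClosure {Ω : Type*} (G : Subgroup (Equiv.Perm Ω)) : Subgroup (Equiv.Perm Ω) where
  carrier := {σ | ∀ a b : Ω, ∃ g ∈ G, g a = σ a ∧ g b = σ b}
  one_mem' := fun a b => ⟨1, G.one_mem, rfl, rfl⟩
  mul_mem' := by
    intro σ τ hσ hτ a b
    obtain ⟨g, hg, hga, hgb⟩ := hτ a b
    obtain ⟨h, hh, hha, hhb⟩ := hσ (τ a) (τ b)
    refine ⟨h * g, mul_mem hh hg, ?_, ?_⟩ <;>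
      simp [Equiv.Perm.mul_apply, hga, hgb, hha, hhb]
  inv_mem' := by
    intro σ hσ a b
    obtain ⟨g, hg, hga, hgb⟩ := hσ (σ⁻¹ a) (σ⁻¹ b)
    refine ⟨g⁻¹, inv_mem hg, ?_, ?_⟩
    · have := congrArg (⇑g⁻¹) hga
      simpa using this.symm
    · have := congrArg (⇑g⁻¹) hgb
      simpa using this.symm

/-- A rank 3 permutation group: transitive with exactly 3 orbits on Ω × Ω. -/
def IsRank3 {Ω : Type*} (G : Subgroup (Equiv.Perm Ω)) : Prop :=
  MulAction.IsPretransitive G Ω ∧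
    Nat.card (MulAction.orbitRel.Quotient G (Ω × Ω)) = 3


/-- The Frobenius map `x ↦ x^p` as a permutation of a finite field of characteristic `p`. -/
noncomputable def frobPerm (F : Type*) [Field F] [Finite F] (p : ℕ) [Fact p.Prime]
    [CharP F p] : Equiv.Perm F :=
  Equiv.ofBijective (fun x => x ^ p)
    (Finite.injective_iff_bijective.mp (fun a b h => frobenius_inj F p (by simpa [frobenius_def] using h)))

/-- Multiplication by a fixed unit as a permutation of a field. -/
noncomputable def mulPerm {F : Type*} [Field F] (u : Fˣ) : Equiv.Perm F :=
  Equiv.mulLeft₀ (u : F) (Units.ne_zero u)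


/-- The set of translations `x ↦ x + b` of a field `F`, inside `Sym(F)`. -/
def translations (F : Type*) [Field F] : Set (Equiv.Perm F) :=
  Set.range (fun b : F => Equiv.addRight b)

/-- The one-dimensional affine semilinear group `AΓL₁(p^d)` as a set of permutations:
all maps `x ↦ a · x^(p^i) + b` with `a ∈ Fˣ`, `b ∈ F`, `0 ≤ i < d`. -/
def AGammaL1 (p d : ℕ) (F : Type*) [Field F] : Set (Equiv.Perm F) :=
  {σ : Equiv.Perm F | ∃ (a : Fˣ) (b : F) (i : ℕ), i < d ∧
    ∀ x : F, σ x = (a : F) * x ^ p ^ i + b}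

/-- The one-dimensional semilinear group `ΓL₁(p^d)` as a set of permutations:
all maps `x ↦ a · x^(p^i)` with `a ∈ Fˣ`, `0 ≤ i < d`. -/
def GammaL1 (p d : ℕ) (F : Type*) [Field F] : Set (Equiv.Perm F) :=
  {σ : Equiv.Perm F | ∃ (a : Fˣ) (i : ℕ), i < d ∧ ∀ x : F, σ x = (a : F) * x ^ p ^ i}

/-!
Both sides consist of maps `x ↦ c · x^(p^j) + b`; what matters is which multipliers `c` occur.
The generators of `⟨T, G₀⟩` have this form with `c ∈ C`, and these maps are closed under
composition, so `⟨T, G₀⟩` is exactly the set of them (in a finite group a submonoid is a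
subgroup). Every element of `⟨T, H⟩` is `x ↦ h x + β` with `h ∈ H` additive. If
`σ x = a · x^(p^i) + b` lies in the 2-closure, comparing `σ` with an element of `⟨T, H⟩` at `0`
and `ω^e` gives `h (ω^e) = a · (ω^e)^(p^i) ∈ C`, hence `a ∈ C`. Conversely, for `c ∈ C` the map
`z ↦ c · z^(p^j)` preserves `C` and `F* ∖ C`, because `z ↦ z^(p^j)` is injective and so permutes
the finite group `C`; hence it sends every `z` into its `H`-orbit, and for `z = y - x` this
yields an element of `⟨T, H⟩` agreeing with `σ` at `x` and `y`.
-/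

open MulAction

section

variable {F : Type*} [Field F]

def affineSemilinearOver (p : ℕ) (K : Subgroup Fˣ) : Set (Equiv.Perm F) :=
  {σ | ∃ c ∈ K, ∃ (j : ℕ) (b : F), ∀ x, σ x = c * x ^ p ^ j + b}

theorem affineSemilinearOver_subset_AGammaL1 [Fintype F] {p d : ℕ}
    (hF : Fintype.card F = p ^ d) (K : Subgroup Fˣ) :
    affineSemilinearOver p K ⊆ AGammaL1 p d F := by
  rintro σ ⟨c, -, j, b, hσ⟩
  have hd : 0 < d := Nat.pos_of_ne_zero fun hd => by
    rw [hd, pow_zero] at hF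
    exact (Fintype.one_lt_card (α := F)).ne' hF
  refine ⟨c, b, j % d, Nat.mod_lt j hd, fun x => ?_⟩
  rw [hσ, ← Nat.div_add_mod j d, pow_add, pow_mul, pow_mul, ← hF, FiniteField.pow_card_pow,
    Nat.div_add_mod]

end

section

variable {F : Type*} [Field F] {p d : ℕ} [Fact p.Prime] [CharP F p] {g : Equiv.Perm F}

theorem GammaL1.map_add (hg : g ∈ GammaL1 p d F) (x y : F) : g (x + y) = g x + g y := by
  obtain ⟨a, i, -, hg⟩ := hg
  rw [hg, hg, hg, add_pow_char_pow, mul_add]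

theorem GammaL1.map_sub (hg : g ∈ GammaL1 p d F) (x y : F) : g (x - y) = g x - g y := by
  obtain ⟨a, i, -, hg⟩ := hg
  rw [hg, hg, hg, sub_pow_char_pow, mul_sub]

theorem GammaL1.map_zero (hg : g ∈ GammaL1 p d F) : g 0 = 0 := by
  simpa using GammaL1.map_sub hg 0 0

theorem exists_add_of_mem_closure_translations_union {H : Subgroup (Equiv.Perm F)}
    (hH : (H : Set (Equiv.Perm F)) ⊆ GammaL1 p d F)
    (hg : g ∈ Subgroup.closure (translations F ∪ (H : Set (Equiv.Perm F)))) :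
    ∃ h ∈ H, ∃ β : F, ∀ x, g x = h x + β := by
  induction hg using Subgroup.closure_induction with
  | mem g hg =>
    rcases hg with ⟨b, rfl⟩ | hg
    · exact ⟨1, H.one_mem, b, fun x => rfl⟩
    · exact ⟨g, hg, 0, fun x => (add_zero _).symm⟩
  | one => exact ⟨1, H.one_mem, 0, fun x => (add_zero _).symm⟩
  | mul g g' _ _ ihg ihg' =>
    obtain ⟨h, hh, β, hg⟩ := ihg
    obtain ⟨h', hh', β', hg'⟩ := ihg'
    refine ⟨h * h', H.mul_mem hh hh', h β' + β, fun x => ?_⟩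
    rw [Equiv.Perm.mul_apply, hg, hg', GammaL1.map_add (hH hh), Equiv.Perm.mul_apply, add_assoc]
  | inv g _ ihg =>
    obtain ⟨h, hh, β, hg⟩ := ihg
    refine ⟨h⁻¹, H.inv_mem hh, -h⁻¹ β, fun x => ?_⟩
    rw [Equiv.Perm.inv_eq_iff_eq, hg, ← sub_eq_add_neg, GammaL1.map_sub (hH hh),
      Equiv.Perm.coe_inv, Equiv.apply_symm_apply, Equiv.apply_symm_apply,
      sub_add_cancel]

theorem mem_twoClosure_closure_translations_union {H : Subgroup (Equiv.Perm F)}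
    (hH : (H : Set (Equiv.Perm F)) ⊆ GammaL1 p d F) {σ : Equiv.Perm F}
    (hσ : ∀ x y, σ y - σ x ∈ orbit H (y - x)) :
    σ ∈ twoClosure (Subgroup.closure (translations F ∪ (H : Set (Equiv.Perm F)))) := by
  intro x y
  obtain ⟨⟨h, hh⟩, hxy⟩ := hσ x y
  change h (y - x) = σ y - σ x at hxy
  refine ⟨Equiv.addRight (σ x - h x) * h,
    mul_mem (Subgroup.subset_closure (.inl ⟨_, rfl⟩)) (Subgroup.subset_closure (.inr hh)), ?_, ?_⟩
  · simp
  · rw [GammaL1.map_sub (hH hh)] at hxy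
    simp only [Equiv.Perm.mul_apply, Equiv.coe_addRight]
    linear_combination hxy

theorem frobPerm_pow_apply [Finite F] (j : ℕ) (x : F) : (frobPerm F p ^ j) x = x ^ p ^ j := by
  induction j with
  | zero => simp
  | succ j ih => rw [pow_succ', Equiv.Perm.mul_apply, ih, pow_succ, pow_mul]; rfl

theorem closure_translations_mulPerm_frobPerm [Finite F] (u : Fˣ) :
    (Subgroup.closure (translations F ∪ {mulPerm u, frobPerm F p}) : Set (Equiv.Perm F)) =
      affineSemilinearOver p (Subgroup.zpowers u) := by
  set G := Subgroup.closure (translations F ∪ {mulPerm u, frobPerm F p})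
  ext σ
  constructor
  · intro hσ
    rw [SetLike.mem_coe, ← Subgroup.mem_toSubmonoid, Subgroup.closure_toSubmonoid_of_finite] at hσ
    induction hσ using Submonoid.closure_induction with
    | mem σ hσ =>
      rcases hσ with ⟨b, rfl⟩ | rfl | rfl
      · exact ⟨1, one_mem _, 0, b, fun x => by simp⟩
      · exact ⟨u, Subgroup.mem_zpowers u, 0, 0, fun x => by simp [mulPerm]⟩
      · exact ⟨1, one_mem _, 1, 0, fun x => by simp [frobPerm]⟩
    | one => exact ⟨1, one_mem _, 0, 0, fun x => by simp⟩
    | mul σ τ _ _ ihσ ihτ =>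
      obtain ⟨c, hc, j, b, hσ⟩ := ihσ
      obtain ⟨c', hc', j', b', hτ⟩ := ihτ
      refine ⟨c * c' ^ p ^ j, mul_mem hc (pow_mem hc' _), j' + j, c * b' ^ p ^ j + b, fun x => ?_⟩
      rw [Equiv.Perm.mul_apply, hσ, hτ, add_pow_char_pow, mul_pow, ← pow_mul, ← pow_add]
      push_cast
      ring
  · rintro ⟨c, hc, j, b, hσ⟩
    obtain ⟨m, rfl⟩ := Subgroup.mem_zpowers_iff.mp hc
    have hσ' : σ = Equiv.addRight b * (MulAction.toPermHom Fˣ F u ^ m * frobPerm F p ^ j) := by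
      ext x
      rw [hσ, Equiv.Perm.mul_apply, Equiv.Perm.mul_apply, frobPerm_pow_apply, ← map_zpow]
      rfl
    have hT : Equiv.addRight b ∈ G := Subgroup.subset_closure (.inl ⟨b, rfl⟩)
    have hu : MulAction.toPermHom Fˣ F u ∈ G :=
      Subgroup.subset_closure (.inr (.inl (Equiv.ext fun _ => rfl)))
    have hφ : frobPerm F p ∈ G := Subgroup.subset_closure (.inr (.inr rfl))
    rw [hσ']
    exact mul_mem hT (mul_mem (zpow_mem hu m) (pow_mem hφ j))

theorem pow_char_pow_mem_iff [Finite F] (K : Subgroup Fˣ) (j : ℕ) {v : Fˣ} :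
    v ^ p ^ j ∈ K ↔ v ∈ K := by
  refine ⟨fun hv => ?_, fun hv => pow_mem hv _⟩
  have hinj : Function.Injective fun w : Fˣ => w ^ p ^ j := fun w w' h =>
    Units.ext <| (iterateFrobenius F p j).injective <| by
      simpa [iterateFrobenius_def] using congrArg Units.val h
  obtain ⟨w, hw, hwv⟩ := ((Set.toFinite (K : Set Fˣ)).injOn_iff_bijOn_of_mapsTo
    (fun w hw => pow_mem hw (p ^ j))).mp hinj.injOn |>.surjOn hv
  exact hinj hwv ▸ hw

theorem mul_pow_char_pow_mem_orbit [Finite F] {H : Subgroup (Equiv.Perm F)} {K : Subgroup Fˣ}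
    {C : Set F} (hC : C = {x : F | ∃ c : Fˣ, c ∈ K ∧ x = (c : F)}) {a₀ a₁ : F}
    (hC_orbit : orbit H a₀ = C) (hCc_orbit : orbit H a₁ = {x : F | x ≠ 0} \ C)
    {c : Fˣ} (hc : c ∈ K) (j : ℕ) (z : F) : c * z ^ p ^ j ∈ orbit H z := by
  rcases eq_or_ne z 0 with rfl | hz
  · rw [zero_pow (pow_ne_zero j (Fact.out : p.Prime).ne_zero), mul_zero]
    exact mem_orbit_self 0
  lift z to Fˣ using hz.isUnit
  have hmem_C (v : Fˣ) : (v : F) ∈ C ↔ v ∈ K := by simp [hC, Units.val_inj]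
  have hmem_C_iff : ((c * z ^ p ^ j : Fˣ) : F) ∈ C ↔ (z : F) ∈ C := by
    rw [hmem_C, hmem_C, Subgroup.mul_mem_cancel_left K hc, pow_char_pow_mem_iff]
  push_cast at hmem_C_iff
  by_cases hzC : (z : F) ∈ C
  · rw [orbit_eq_iff.mpr (hC_orbit ▸ hzC), hC_orbit]
    exact hmem_C_iff.mpr hzC
  · have hz_orbit : (z : F) ∈ orbit H a₁ := hCc_orbit ▸ ⟨z.ne_zero, hzC⟩
    rw [orbit_eq_iff.mpr hz_orbit, hCc_orbit]
    exact ⟨by simp, mt hmem_C_iff.mp hzC⟩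

theorem mem_affineSemilinearOver_of_mem_twoClosure {H : Subgroup (Equiv.Perm F)}
    (hH : (H : Set (Equiv.Perm F)) ⊆ GammaL1 p d F) {K : Subgroup Fˣ} {C : Set F}
    (hC : C = {x : F | ∃ c : Fˣ, c ∈ K ∧ x = (c : F)}) {a₀ : F} (hC_orbit : orbit H a₀ = C)
    {σ : Equiv.Perm F}
    (hσ : σ ∈ twoClosure (Subgroup.closure (translations F ∪ (H : Set (Equiv.Perm F)))))
    (hσ_aff : σ ∈ AGammaL1 p d F) : σ ∈ affineSemilinearOver p K := by
  obtain ⟨a, b, i, -, hσ_aff⟩ := hσ_aff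
  obtain ⟨g, hg, hg0, hga₀⟩ := hσ 0 a₀
  obtain ⟨h, hh, β, hg⟩ := exists_add_of_mem_closure_translations_union hH hg
  have hβ : β = b := by
    simpa [hg, GammaL1.map_zero (hH hh), hσ_aff, (Fact.out : p.Prime).ne_zero] using hg0
  have hha₀ : h a₀ = a * a₀ ^ p ^ i := by
    simpa [hg, hσ_aff, hβ] using hga₀
  have ha₀ : a₀ ∈ C := hC_orbit ▸ mem_orbit_self a₀
  have hha₀_mem : h a₀ ∈ C := hC_orbit ▸ mem_orbit a₀ (⟨h, hh⟩ : H)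
  rw [hC] at ha₀ hha₀_mem
  obtain ⟨w₀, hw₀, rfl⟩ := ha₀
  obtain ⟨w, hw, hw_eq⟩ := hha₀_mem
  have ha : a * w₀ ^ p ^ i = w := Units.ext (by push_cast; rw [← hw_eq, hha₀])
  rw [← ha] at hw
  exact ⟨a, (Subgroup.mul_mem_cancel_right K (pow_mem hw₀ _)).mp hw, i, b, hσ_aff⟩

theorem mem_twoClosure_of_mem_affineSemilinearOver [Finite F] {H : Subgroup (Equiv.Perm F)}
    (hH : (H : Set (Equiv.Perm F)) ⊆ GammaL1 p d F) {K : Subgroup Fˣ} {C : Set F}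
    (hC : C = {x : F | ∃ c : Fˣ, c ∈ K ∧ x = (c : F)}) {a₀ a₁ : F}
    (hC_orbit : orbit H a₀ = C) (hCc_orbit : orbit H a₁ = {x : F | x ≠ 0} \ C)
    {σ : Equiv.Perm F} (hσ : σ ∈ affineSemilinearOver p K) :
    σ ∈ twoClosure (Subgroup.closure (translations F ∪ (H : Set (Equiv.Perm F)))) := by
  obtain ⟨c, hc, j, b, hσ⟩ := hσ
  refine mem_twoClosure_closure_translations_union hH fun x y => ?_
  rw [hσ, hσ, add_sub_add_right_eq_sub, ← mul_sub, ← sub_pow_char_pow]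
  exact mul_pow_char_pow_mem_orbit hC hC_orbit hCc_orbit hc j (y - x)

end

theorem vanLintSchrijver_twoClosure_general
    (p e d q : ℕ) [Fact p.Prime] (hq : q = p ^ d)
    (F : Type*) [Field F] [Fintype F] [CharP F p] (hF : Fintype.card F = q)
    (ω : Fˣ)
    (C : Set F) (hC : C = {x : F | ∃ c : Fˣ, c ∈ Subgroup.zpowers (ω ^ e) ∧ x = (c : F)})
    (H : Subgroup (Equiv.Perm F)) (hH : (H : Set (Equiv.Perm F)) ⊆ GammaL1 p d F)
    (hHorb1 : MulAction.orbit H ((ω : F) ^ e) = C)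
    (hHorb2 : MulAction.orbit H (ω : F) = {x : F | x ≠ 0} \ C) :
    (twoClosure (Subgroup.closure (translations F ∪ (H : Set (Equiv.Perm F)))) :
        Set (Equiv.Perm F)) ∩ AGammaL1 p d F =
      (Subgroup.closure (translations F ∪ {mulPerm (ω ^ e), frobPerm F p}) :
        Set (Equiv.Perm F)) := by
  subst hq
  rw [closure_translations_mulPerm_frobPerm]
  ext σ
  exact ⟨fun ⟨hσ, hσ_aff⟩ => mem_affineSemilinearOver_of_mem_twoClosure hH hC hHorb1 hσ hσ_aff,
    fun hσ => ⟨mem_twoClosure_of_mem_affineSemilinearOver hH hC hHorb1 hHorb2 hσ,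
      affineSemilinearOver_subset_AGammaL1 hF _ hσ⟩⟩

/-- Muzychuk; Van Lint–Schrijver graphs. With `p, e, k, d, q, F, ω, C`
as in the Van Lint–Schrijver situation, if `H ≤ ΓL₁(q)` has orbits exactly `C` and
`F \ ({0} ∪ C)` on the nonzero elements, then `⟨T, H⟩⁽²⁾ ∩ AΓL₁(q) = ⟨T, G₀⟩`, where
`T` is the translation group and `G₀ = ⟨x ↦ ω^e x, x ↦ x^p⟩`. -/
theorem vanLintSchrijver_twoClosure
    (p e k d q : ℕ) [Fact p.Prime] (he : e.Prime)
    (hord : orderOf (p : ZMod e) = e - 1)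
    (hk : 0 < k) (hd : d = k * (e - 1)) (hq : q = p ^ d)
    (F : Type*) [Field F] [Fintype F] [CharP F p] (hF : Fintype.card F = q)
    (ω : Fˣ) (hω : ∀ x : Fˣ, x ∈ Subgroup.zpowers ω)
    (C : Set F) (hC : C = {x : F | ∃ c : Fˣ, c ∈ Subgroup.zpowers (ω ^ e) ∧ x = (c : F)})
    (H : Subgroup (Equiv.Perm F)) (hH : (H : Set (Equiv.Perm F)) ⊆ GammaL1 p d F)
    (hHorb1 : MulAction.orbit H ((ω : F) ^ e) = C)
    (hHorb2 : MulAction.orbit H (ω : F) = {x : F | x ≠ 0} \ C) :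
    (twoClosure (Subgroup.closure (translations F ∪ (H : Set (Equiv.Perm F)))) :
        Set (Equiv.Perm F)) ∩ AGammaL1 p d F =
      (Subgroup.closure (translations F ∪ {mulPerm (ω ^ e), frobPerm F p}) :
        Set (Equiv.Perm F)) :=
  vanLintSchrijver_twoClosure_general p e d q hq F hF ω C hC H hH hHorb1 hHorb2
end

section
/- Let p ≡ 3 (mod 4) be a prime and k an even positive integer, q = p^k, F = GF(q), ω a generator of F*, and C = ⟨ω⁴⟩ the subgroup of fourth powers in F*. Let T ≤ Sym(F) be the group of translations x ↦ x + b (b ∈ F), and let G₀ ≤ Sym(F) be generated by x ↦ ω⁴·x and x ↦ ω·x^p. If H ≤ ΓL₁(q) is any subgroup whose orbits on F ∖ {0} are exactly C ∪ ωC and ω²C ∪ ω³C, then the 2-closure of the group ⟨T, H⟩ satisfies ⟨T, H⟩^(2) ∩ AΓL₁(q) = ⟨T, G₀⟩. -/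
/-- The coset `ω^j · ⟨ω^4⟩` of the group of fourth powers, as a subset of the field `F`. -/
def quarticCoset {F : Type*} [Field F] (ω : Fˣ) (j : ℕ) : Set F :=
  {x : F | ∃ c : Fˣ, c ∈ Subgroup.zpowers (ω ^ 4) ∧ x = (ω : F) ^ j * (c : F)}


/-!
Since `H` consists of additive maps, `G = ⟨T, H⟩` is `T ⋊ H`, and an additive permutation `σ`
lies in `G⁽²⁾` iff it maps every `x` into its `H`-orbit: the pair `(0, x)` forces `σ x ∈ H • x`,
and conversely, for a pair `(x, y)` and `h ∈ H` with `h (y - x) = σ (y - x)`, the map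
`z ↦ h (z - x) + σ x` lies in `G` and agrees with `σ` at `x` and `y`.

Because `k` is even, `4 ∣ q - 1`, and the two `H`-orbits on `Fˣ` are `{ω ^ m | m ≡ 0, 1 mod 4}` and
`{ω ^ m | m ≡ 2, 3 mod 4}`. Multiplication by `ω ^ e` preserves them iff `4 ∣ e`, and
`x ↦ ω x ^ p` preserves them since `p ≡ -1 mod 4` turns `m` into `1 - m`. So a map
`x ↦ a x ^ p ^ i + b` in `G⁽²⁾` is a translation composed with a multiplication by a fourth power
and with `(x ↦ ω x ^ p) ^ i`.
-/

open MulAction Subgroup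

section OrbitPreserving

variable (M α : Type*) [Group M] [MulAction M α]

def orbitPreserving : Subgroup (Equiv.Perm α) where
  carrier := {σ | ∀ x, σ x ∈ orbit M x}
  one_mem' := mem_orbit_self
  mul_mem' {σ τ} hσ hτ x := by
    rw [Equiv.Perm.mul_apply, ← orbit_eq_iff.mpr (hτ x)]
    exact hσ (τ x)
  inv_mem' {σ} hσ x := by
    have h := hσ (σ⁻¹ x)
    rw [Equiv.Perm.coe_inv, Equiv.apply_symm_apply] at h
    exact mem_orbit_symm.mp h

end OrbitPreserving

theorem le_twoClosure {Ω : Type*} (G : Subgroup (Equiv.Perm Ω)) : G ≤ twoClosure G :=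
  fun σ hσ _ _ => ⟨σ, hσ, rfl, rfl⟩

section Translations

variable {F : Type*} [Field F] {H : Subgroup (Equiv.Perm F)}

theorem exists_eq_add_of_mem_closure_translations_union
    (hH : ∀ h ∈ H, ∀ x y : F, h (x + y) = h x + h y) {g : Equiv.Perm F}
    (hg : g ∈ closure (translations F ∪ (H : Set (Equiv.Perm F)))) :
    ∃ h ∈ H, ∃ c : F, ∀ x, g x = h x + c := by
  induction hg using closure_induction with
  | mem g hg =>
    rcases hg with ⟨b, rfl⟩ | hg
    · exact ⟨1, one_mem H, b, fun x => rfl⟩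
    · exact ⟨g, hg, 0, fun x => (add_zero _).symm⟩
  | one => exact ⟨1, one_mem H, 0, fun x => (add_zero _).symm⟩
  | mul g₁ g₂ _ _ ih₁ ih₂ =>
    obtain ⟨h₁, hh₁, c₁, hg₁⟩ := ih₁
    obtain ⟨h₂, hh₂, c₂, hg₂⟩ := ih₂
    refine ⟨h₁ * h₂, mul_mem hh₁ hh₂, h₁ c₂ + c₁, fun x => ?_⟩
    rw [Equiv.Perm.mul_apply, hg₂, hg₁, hH h₁ hh₁, add_assoc, Equiv.Perm.mul_apply]
  | inv g _ ih =>
    obtain ⟨h, hh, c, hg⟩ := ih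
    have hsub : ∀ u v, h (u - v) = h u - h v := map_sub (AddMonoidHom.mk' h (hH h hh))
    refine ⟨h⁻¹, inv_mem hh, -h⁻¹ c, fun x => ?_⟩
    rw [Equiv.Perm.inv_eq_iff_eq, hg, ← sub_eq_add_neg, hsub, Equiv.Perm.coe_inv,
      Equiv.apply_symm_apply, Equiv.apply_symm_apply, sub_add_cancel]

theorem mem_twoClosure_closure_translations_union_iff
    (hH : ∀ h ∈ H, ∀ x y : F, h (x + y) = h x + h y) {σ : Equiv.Perm F}
    (hσ : ∀ x y : F, σ (x + y) = σ x + σ y) :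
    σ ∈ twoClosure (closure (translations F ∪ (H : Set (Equiv.Perm F)))) ↔
      σ ∈ orbitPreserving H F := by
  have hσ0 : σ 0 = 0 := map_zero (AddMonoidHom.mk' σ hσ)
  constructor
  · intro h2 x
    obtain ⟨g, hg, hg0, hgx⟩ := h2 0 x
    obtain ⟨h, hh, c, hgh⟩ := exists_eq_add_of_mem_closure_translations_union hH hg
    have hc : c = 0 := by
      have h0 : h 0 = 0 := map_zero (AddMonoidHom.mk' h (hH h hh))
      rw [hgh, hσ0, h0, zero_add] at hg0
      exact hg0
    rw [← hgx, hgh, hc, add_zero]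
    exact ⟨⟨h, hh⟩, rfl⟩
  · intro hσH a b
    obtain ⟨⟨h, hh⟩, hhb⟩ := hσH (b - a)
    refine ⟨Equiv.addRight (σ a) * h * Equiv.addRight (-a), ?_, ?_, ?_⟩
    · have hT (c : F) : Equiv.addRight c ∈ closure (translations F ∪ (H : Set (Equiv.Perm F))) :=
        subset_closure (Or.inl ⟨c, rfl⟩)
      exact mul_mem (mul_mem (hT _) (subset_closure (Or.inr hh))) (hT _)
    · have h0 : h 0 = 0 := map_zero (AddMonoidHom.mk' h (hH h hh))
      simp [h0]
    · change h (b - a) = σ (b - a) at hhb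
      change h (b + -a) + σ a = σ b
      rw [← sub_eq_add_neg, hhb, ← hσ, sub_add_cancel]

end Translations

theorem four_dvd_pow_sub_one {p k : ℕ} (hp : p % 4 = 3) (hk : Even k) : 4 ∣ p ^ k - 1 := by
  obtain ⟨r, rfl⟩ := hk
  have : p ^ (r + r) % 4 = 1 := by
    rw [← two_mul, pow_mul, Nat.pow_mod, Nat.pow_mod p, hp]
    norm_num
  omega

theorem ne_zero_of_card_eq_pow {α : Type*} [Fintype α] [Nontrivial α] {p d : ℕ}
    (h : Fintype.card α = p ^ d) : d ≠ 0 := by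
  rintro rfl
  simpa [h] using Fintype.one_lt_card (α := α)

theorem pow_pow_mod_of_card_eq {F : Type*} [Field F] [Fintype F] {p d : ℕ}
    (hF : Fintype.card F = p ^ d) (x : F) (n : ℕ) : x ^ p ^ (n % d) = x ^ p ^ n := by
  conv_rhs => rw [← Nat.div_add_mod n d, pow_add, pow_mul, pow_mul, ← hF,
    FiniteField.pow_card_pow]

theorem mem_AGammaL1_of_card_eq {F : Type*} [Field F] [Fintype F] {p d : ℕ}
    (hF : Fintype.card F = p ^ d) {σ : Equiv.Perm F} (a : Fˣ) (b : F) (i : ℕ)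
    (hσ : ∀ x, σ x = a * x ^ p ^ i + b) :
    σ ∈ AGammaL1 p d F :=
  ⟨a, b, i % d, Nat.mod_lt _ (Nat.pos_of_ne_zero (ne_zero_of_card_eq_pow hF)),
    fun x => by rw [hσ, pow_pow_mod_of_card_eq hF]⟩

theorem mulPerm_apply {F : Type*} [Field F] (u : Fˣ) (x : F) : mulPerm u x = u * x :=
  rfl

theorem mulPerm_zpow {F : Type*} [Field F] (u : Fˣ) (n : ℤ) :
    mulPerm (u ^ n) = mulPerm u ^ n := by
  have hperm (v : Fˣ) : mulPerm v = MulAction.toPermHom Fˣ F v := Equiv.ext fun _ => rfl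
  rw [hperm, hperm, map_zpow]

section Semilinear

variable {F : Type*} [Field F] {p : ℕ} [Fact p.Prime] [CharP F p]

theorem map_add_of_forall_eq_mul_pow_char_pow {σ : F → F} {a : F} {i : ℕ}
    (hσ : ∀ x, σ x = a * x ^ p ^ i) (x y : F) : σ (x + y) = σ x + σ y := by
  rw [hσ, hσ, hσ, add_pow_char_pow, mul_add]

theorem mulPerm_mul_frobPerm_apply [Finite F] (u : Fˣ) (x : F) :
    (mulPerm u * frobPerm F p) x = u * x ^ p :=
  rfl

theorem exists_pow_mulPerm_mul_frobPerm_apply [Finite F] (u : Fˣ) (i : ℕ) :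
    ∃ e : Fˣ, ∀ x, ((mulPerm u * frobPerm F p) ^ i) x = e * x ^ p ^ i := by
  induction i with
  | zero => exact ⟨1, fun x => by simp⟩
  | succ i ih =>
    obtain ⟨e, he⟩ := ih
    refine ⟨e * u ^ p ^ i, fun x => ?_⟩
    rw [pow_succ, Equiv.Perm.mul_apply, he, mulPerm_mul_frobPerm_apply]
    push_cast
    ring

theorem mul_mem_AGammaL1 [Fintype F] {d : ℕ} (hF : Fintype.card F = p ^ d)
    {σ τ : Equiv.Perm F} (hσ : σ ∈ AGammaL1 p d F) (hτ : τ ∈ AGammaL1 p d F) :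
    σ * τ ∈ AGammaL1 p d F := by
  obtain ⟨a, b, i, -, hσ⟩ := hσ
  obtain ⟨a', b', j, -, hτ⟩ := hτ
  refine mem_AGammaL1_of_card_eq hF (a * a' ^ p ^ i) (a * b' ^ p ^ i + b) (j + i) fun x => ?_
  rw [Equiv.Perm.mul_apply, hτ, hσ, add_pow_char_pow, mul_pow, ← pow_mul, ← pow_add]
  push_cast
  ring

theorem closure_subset_AGammaL1 [Fintype F] {d : ℕ} (hF : Fintype.card F = p ^ d)
    {s : Set (Equiv.Perm F)} (hs : s ⊆ AGammaL1 p d F) :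
    (closure s : Set (Equiv.Perm F)) ⊆ AGammaL1 p d F := by
  let M : Submonoid (Equiv.Perm F) :=
    { carrier := AGammaL1 p d F
      mul_mem' := mul_mem_AGammaL1 hF
      one_mem' := mem_AGammaL1_of_card_eq hF 1 0 0 fun x => by simp }
  intro σ hσ
  rw [SetLike.mem_coe, ← mem_toSubmonoid, closure_toSubmonoid_of_finite] at hσ
  exact Submonoid.closure_le (S := M) |>.mpr hs hσ

end Semilinear

section QuarticCosets

variable {F : Type*} [Field F] {ω : Fˣ}

theorem zpow_mem_zpowers_pow_four_iff (h4 : 4 ∣ orderOf ω) (n : ℤ) :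
    ω ^ n ∈ zpowers (ω ^ 4) ↔ (n : ZMod 4) = 0 := by
  rw [ZMod.intCast_zmod_eq_zero_iff_dvd, mem_zpowers_iff]
  constructor
  · rintro ⟨t, ht⟩
    rw [← zpow_natCast, ← zpow_mul, zpow_eq_zpow_iff_modEq] at ht
    have := (ht.of_dvd (Int.natCast_dvd_natCast.mpr h4)).dvd
    push_cast at this ⊢
    omega
  · rintro ⟨t, rfl⟩
    exact ⟨t, by rw [← zpow_natCast, ← zpow_mul]⟩

theorem units_zpow_mem_quarticCoset_iff (h4 : 4 ∣ orderOf ω) (m : ℤ) (j : ℕ) :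
    ((ω ^ m : Fˣ) : F) ∈ quarticCoset ω j ↔ (m : ZMod 4) = j := by
  have : ((ω ^ m : Fˣ) : F) ∈ quarticCoset ω j ↔ ω ^ (m - j) ∈ zpowers (ω ^ 4) := by
    constructor
    · rintro ⟨c, hc, hmc⟩
      have : ω ^ m = ω ^ j * c := Units.ext (by simpa using hmc)
      rwa [zpow_sub, zpow_natCast, this, mul_comm, inv_mul_cancel_left]
    · intro h
      refine ⟨_, h, ?_⟩
      rw [zpow_sub, zpow_natCast, ← Units.val_pow_eq_pow_val, ← Units.val_mul, mul_comm (ω ^ m),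
        mul_inv_cancel_left]
  rw [this, zpow_mem_zpowers_pow_four_iff h4, Int.cast_sub, sub_eq_zero, Int.cast_natCast]

theorem units_zpow_mem_lowerHalf_iff (h4 : 4 ∣ orderOf ω) (m : ℤ) :
    ((ω ^ m : Fˣ) : F) ∈ quarticCoset ω 0 ∪ quarticCoset ω 1 ↔ (m : ZMod 4).val < 2 := by
  rw [Set.mem_union, units_zpow_mem_quarticCoset_iff h4, units_zpow_mem_quarticCoset_iff h4]
  generalize (m : ZMod 4) = z
  revert z
  decide

theorem units_zpow_mem_upperHalf_iff (h4 : 4 ∣ orderOf ω) (m : ℤ) :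
    ((ω ^ m : Fˣ) : F) ∈ quarticCoset ω 2 ∪ quarticCoset ω 3 ↔ ¬ (m : ZMod 4).val < 2 := by
  rw [Set.mem_union, units_zpow_mem_quarticCoset_iff h4, units_zpow_mem_quarticCoset_iff h4]
  generalize (m : ZMod 4) = z
  revert z
  decide

theorem exists_units_zpow_eq (hω : ∀ x : Fˣ, x ∈ zpowers ω) {x : F} (hx : x ≠ 0) :
    ∃ m : ℤ, ((ω ^ m : Fˣ) : F) = x := by
  obtain ⟨m, hm⟩ := mem_zpowers_iff.mp (hω (Units.mk0 x hx))
  exact ⟨m, by rw [hm, Units.val_mk0]⟩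

end QuarticCosets

section PeisertOrbits

variable {F : Type*} [Field F] {ω : Fˣ} {H : Subgroup (Equiv.Perm F)}
  (hω : ∀ x : Fˣ, x ∈ zpowers ω) (h4 : 4 ∣ orderOf ω)
  (hHorb : ∀ x : F, x ≠ 0 →
    orbit H x = quarticCoset ω 0 ∪ quarticCoset ω 1 ∨
    orbit H x = quarticCoset ω 2 ∪ quarticCoset ω 3)
  (hHadd : ∀ h ∈ H, ∀ x y : F, h (x + y) = h x + h y)
include h4 hHorb

theorem units_zpow_mem_orbit_iff (m n : ℤ) :
    ((ω ^ n : Fˣ) : F) ∈ orbit H ((ω ^ m : Fˣ) : F) ↔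
      ((m : ZMod 4).val < 2 ↔ (n : ZMod 4).val < 2) := by
  have hself := mem_orbit_self (M := H) ((ω ^ m : Fˣ) : F)
  rcases hHorb _ (Units.ne_zero _) with h | h <;> rw [h] at hself ⊢
  · rw [units_zpow_mem_lowerHalf_iff h4] at hself ⊢
    simp [hself]
  · rw [units_zpow_mem_upperHalf_iff h4] at hself ⊢
    simp [hself]

include hω in
theorem mem_orbitPreserving_of_units_zpow {σ : Equiv.Perm F} (hσ0 : σ 0 = 0)
    (hσ : ∀ m : ℤ, ∃ n : ℤ, σ ((ω ^ m : Fˣ) : F) = ((ω ^ n : Fˣ) : F) ∧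
      ((m : ZMod 4).val < 2 ↔ (n : ZMod 4).val < 2)) :
    σ ∈ orbitPreserving H F := by
  intro x
  rcases eq_or_ne x 0 with rfl | hx
  · rw [hσ0]
    exact mem_orbit_self 0
  · obtain ⟨m, rfl⟩ := exists_units_zpow_eq hω hx
    obtain ⟨n, hσm, hmn⟩ := hσ m
    rw [hσm, units_zpow_mem_orbit_iff h4 hHorb]
    exact hmn

include hω in
theorem mulPerm_units_zpow_mem_orbitPreserving_iff (e : ℤ) :
    mulPerm (ω ^ e) ∈ orbitPreserving H F ↔ (e : ZMod 4) = 0 := by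
  constructor
  · intro h
    have h0 := h ((ω ^ (0 : ℤ) : Fˣ) : F)
    have h1 := h ((ω ^ (1 : ℤ) : Fˣ) : F)
    rw [mulPerm_apply] at h0 h1
    rw [← Units.val_mul, ← zpow_add, units_zpow_mem_orbit_iff h4 hHorb] at h0 h1
    push_cast at h0 h1
    generalize (e : ZMod 4) = z at h0 h1
    revert z
    decide
  · intro he
    refine mem_orbitPreserving_of_units_zpow hω h4 hHorb (mul_zero _) fun m => ⟨e + m, ?_, ?_⟩
    · rw [zpow_add, Units.val_mul, mulPerm_apply]
    · push_cast
      rw [he, zero_add]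

variable {p : ℕ} [Fact p.Prime] [CharP F p] [Finite F] (hp : (p : ZMod 4) = -1)

include hω hp in
theorem mulPerm_mul_frobPerm_mem_orbitPreserving :
    mulPerm ω * frobPerm F p ∈ orbitPreserving H F := by
  refine mem_orbitPreserving_of_units_zpow hω h4 hHorb ?_ fun m => ⟨1 + m * p, ?_, ?_⟩
  · rw [mulPerm_mul_frobPerm_apply, zero_pow (Fact.out : p.Prime).ne_zero, mul_zero]
  · rw [mulPerm_mul_frobPerm_apply, zpow_add, zpow_one, zpow_mul, zpow_natCast, Units.val_mul,
      Units.val_pow_eq_pow_val]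
  · push_cast
    rw [hp]
    generalize (m : ZMod 4) = z
    revert z
    decide

include hω hp in
theorem mem_closure_of_mem_orbitPreserving {σ : Equiv.Perm F}
    {a : Fˣ} {i : ℕ} (hσ : ∀ x, σ x = a * x ^ p ^ i) (hσH : σ ∈ orbitPreserving H F) :
    σ ∈ closure {mulPerm (ω ^ 4), mulPerm ω * frobPerm F p} := by
  obtain ⟨e, he⟩ := exists_pow_mulPerm_mul_frobPerm_apply (p := p) ω i
  have hσe : σ = mulPerm (a * e⁻¹) * (mulPerm ω * frobPerm F p) ^ i := Equiv.ext fun x => by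
    rw [hσ, Equiv.Perm.mul_apply, he, mulPerm_apply, Units.val_mul, mul_assoc,
      Units.inv_mul_cancel_left]
  obtain ⟨n, hn⟩ := mem_zpowers_iff.mp (hω (a * e⁻¹))
  have hn4 : (n : ZMod 4) = 0 := by
    rw [← mulPerm_units_zpow_mem_orbitPreserving_iff hω h4 hHorb, hn,
      eq_mul_inv_of_mul_eq hσe.symm]
    exact mul_mem hσH
      (inv_mem (pow_mem (mulPerm_mul_frobPerm_mem_orbitPreserving hω h4 hHorb hp) i))
  obtain ⟨t, ht⟩ := mem_zpowers_iff.mp ((zpow_mem_zpowers_pow_four_iff h4 n).mpr hn4)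
  rw [hσe, ← hn, ← ht, mulPerm_zpow]
  exact mul_mem (zpow_mem (subset_closure (Set.mem_insert _ _)) t)
    (pow_mem (subset_closure (Set.mem_insert_of_mem _ (Set.mem_singleton _))) i)

include hω hp hHadd in
theorem twoClosure_inter_AGammaL1_subset_closure (d : ℕ) :
    (twoClosure (closure (translations F ∪ (H : Set (Equiv.Perm F)))) : Set (Equiv.Perm F)) ∩
        AGammaL1 p d F ⊆
      closure (translations F ∪ {mulPerm (ω ^ 4), mulPerm ω * frobPerm F p}) := by
  rintro σ ⟨hσ, a, b, i, -, hσab⟩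
  have hσ₀ : ∀ x, ((Equiv.addRight b)⁻¹ * σ) x = a * x ^ p ^ i := fun x => by simp [hσab]
  have h₀ := (mem_twoClosure_closure_translations_union_iff hHadd
    (map_add_of_forall_eq_mul_pow_char_pow hσ₀)).mp
    (mul_mem (inv_mem (le_twoClosure _ (subset_closure (Or.inl ⟨b, rfl⟩)))) hσ)
  have hR : Equiv.addRight b * ((Equiv.addRight b)⁻¹ * σ) ∈
      closure (translations F ∪ {mulPerm (ω ^ 4), mulPerm ω * frobPerm F p}) :=
    mul_mem (subset_closure (Or.inl ⟨b, rfl⟩)) (closure_mono Set.subset_union_right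
      (mem_closure_of_mem_orbitPreserving hω h4 hHorb hp hσ₀ h₀))
  rwa [mul_inv_cancel_left] at hR

include hω hp hHadd in
theorem closure_translations_union_le_twoClosure :
    closure (translations F ∪ {mulPerm (ω ^ 4), mulPerm ω * frobPerm F p}) ≤
      twoClosure (closure (translations F ∪ (H : Set (Equiv.Perm F)))) := by
  refine (closure_le _).mpr
    (Set.union_subset (fun τ hτ => le_twoClosure _ (subset_closure (Or.inl hτ))) ?_)
  rintro τ (rfl | rfl)
  · have hτ (x : F) : mulPerm (ω ^ 4) x = ((ω ^ 4 : Fˣ) : F) * x ^ p ^ 0 := by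
      rw [mulPerm_apply, pow_zero, pow_one]
    refine (mem_twoClosure_closure_translations_union_iff hHadd
      (map_add_of_forall_eq_mul_pow_char_pow hτ)).mpr ?_
    rw [← zpow_natCast, mulPerm_units_zpow_mem_orbitPreserving_iff hω h4 hHorb]
    rfl
  · have hτ (x : F) : (mulPerm ω * frobPerm F p) x = (ω : F) * x ^ p ^ 1 := by
      rw [mulPerm_mul_frobPerm_apply, pow_one]
    exact (mem_twoClosure_closure_translations_union_iff hHadd
      (map_add_of_forall_eq_mul_pow_char_pow hτ)).mpr
      (mulPerm_mul_frobPerm_mem_orbitPreserving hω h4 hHorb hp)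

end PeisertOrbits

theorem peisert_twoClosure_general
    (p k d q : ℕ) [Fact p.Prime] (hp4 : p % 4 = 3)
    (hkeven : Even k) (hd : d = k) (hq : q = p ^ k)
    (F : Type*) [Field F] [Fintype F] [CharP F p] (hF : Fintype.card F = q)
    (ω : Fˣ) (hω : ∀ x : Fˣ, x ∈ Subgroup.zpowers ω)
    (H : Subgroup (Equiv.Perm F)) (hH : (H : Set (Equiv.Perm F)) ⊆ GammaL1 p d F)
    (hHorb : ∀ x : F, x ≠ 0 →
      MulAction.orbit H x = quarticCoset ω 0 ∪ quarticCoset ω 1 ∨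
      MulAction.orbit H x = quarticCoset ω 2 ∪ quarticCoset ω 3) :
    (twoClosure (Subgroup.closure (translations F ∪ (H : Set (Equiv.Perm F)))) :
        Set (Equiv.Perm F)) ∩ AGammaL1 p d F =
      (Subgroup.closure (translations F ∪ {mulPerm (ω ^ 4), mulPerm ω * frobPerm F p}) :
        Set (Equiv.Perm F)) := by
  classical
  subst hd hq
  have h4 : 4 ∣ orderOf ω := by
    rw [orderOf_eq_card_of_forall_mem_zpowers hω, Nat.card_eq_fintype_card,
      Fintype.card_units, hF]
    exact four_dvd_pow_sub_one hp4 hkeven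
  have hp : (p : ZMod 4) = -1 := by
    rw [← ZMod.natCast_mod, hp4]
    rfl
  have hHadd : ∀ h ∈ H, ∀ x y : F, h (x + y) = h x + h y := fun h hh => by
    obtain ⟨a, i, -, ha⟩ := hH hh
    exact map_add_of_forall_eq_mul_pow_char_pow ha
  refine subset_antisymm (twoClosure_inter_AGammaL1_subset_closure hω h4 hHorb hHadd hp _)
    (Set.subset_inter (closure_translations_union_le_twoClosure hω h4 hHorb hHadd hp)
      (closure_subset_AGammaL1 hF (Set.union_subset ?_ ?_)))
  · rintro τ ⟨b, rfl⟩
    exact mem_AGammaL1_of_card_eq hF 1 b 0 fun x => by simp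
  · rintro τ (rfl | rfl)
    · exact mem_AGammaL1_of_card_eq hF (ω ^ 4) 0 0 fun x => by simp [mulPerm_apply]
    · exact mem_AGammaL1_of_card_eq hF ω 0 1 fun x => by simp [mulPerm_mul_frobPerm_apply]

/-- Muzychuk; Peisert graphs. Let `p ≡ 3 (mod 4)` be a prime, `k` even,
`q = p^k`, `F = GF(q)`, `ω` a generator of `Fˣ`, `C = ⟨ω⁴⟩`. If `H ≤ ΓL₁(q)` has orbits
exactly `C ∪ ωC` and `ω²C ∪ ω³C` on the nonzero elements, then
`⟨T, H⟩⁽²⁾ ∩ AΓL₁(q) = ⟨T, G₀⟩`, where `T` is the translation group and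
`G₀ = ⟨x ↦ ω⁴ x, x ↦ ω x^p⟩`. -/
theorem peisert_twoClosure
    (p k d q : ℕ) [Fact p.Prime] (hp4 : p % 4 = 3)
    (hk : 0 < k) (hkeven : Even k) (hd : d = k) (hq : q = p ^ k)
    (F : Type*) [Field F] [Fintype F] [CharP F p] (hF : Fintype.card F = q)
    (ω : Fˣ) (hω : ∀ x : Fˣ, x ∈ Subgroup.zpowers ω)
    (H : Subgroup (Equiv.Perm F)) (hH : (H : Set (Equiv.Perm F)) ⊆ GammaL1 p d F)
    (hHorb1 : MulAction.orbit H ((1 : F)) = quarticCoset ω 0 ∪ quarticCoset ω 1)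
    (hHorb2 : MulAction.orbit H ((ω : F) ^ 2) = quarticCoset ω 2 ∪ quarticCoset ω 3)
    (hHorb : ∀ x : F, x ≠ 0 →
      MulAction.orbit H x = quarticCoset ω 0 ∪ quarticCoset ω 1 ∨
      MulAction.orbit H x = quarticCoset ω 2 ∪ quarticCoset ω 3) :
    (twoClosure (Subgroup.closure (translations F ∪ (H : Set (Equiv.Perm F)))) :
        Set (Equiv.Perm F)) ∩ AGammaL1 p d F =
      (Subgroup.closure (translations F ∪ {mulPerm (ω ^ 4), mulPerm ω * frobPerm F p}) :
        Set (Equiv.Perm F)) :=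
  peisert_twoClosure_general p k d q hp4 hkeven hd hq F hF ω hω H hH hHorb
end
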